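/- Let A be a Hopf algebra, P a right A-comodule algebra with coinvariants B, and Φ : A → P convolution invertible with Δ_R ∘ Φ = (Φ ⊗ id) ∘ Δ and Φ(1) = 1. Then the map s_Φ : P → P defined by s_Φ(p) = p₍₀₎ Φ⁻¹(p₍₁₎) takes values in B, i.e. Δ_R(s_Φ(p)) = s_Φ(p) ⊗ 1 for all p ∈ P; moreover s_Φ is a left B-module homomorphism and s_Φ ∘ Φ = η_P ∘ ε. -/

import Mathlib

open TensorProduct

variable (k : Type*) [Field k] {A P : Type*} [Ring A] [HopfAlgebra k A]
  [Ring P] [Algebra k P]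

/-- Convolution of linear maps `A → P`: `(f * g)(a) = f(a₍₁₎) g(a₍₂₎)`. -/
noncomputable def conv (f g : A →ₗ[k] P) : A →ₗ[k] P :=
  (LinearMap.mul' k P) ∘ₗ (TensorProduct.map f g) ∘ₗ (Coalgebra.comul (R := k) (A := A))

/-- The convolution unit `η_P ∘ ε`. -/
noncomputable def convUnit : A →ₗ[k] P :=
  (Algebra.linearMap k P) ∘ₗ (Coalgebra.counit (R := k) (A := A))

/-- The section `s_Φ : P → P`, `p ↦ p₍₀₎ Φ⁻¹(p₍₁₎)`, where `Ψ = Φ⁻¹`. -/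
noncomputable def sPhi (ρ : P →ₐ[k] P ⊗[k] A) (Ψ : A →ₗ[k] P) : P →ₗ[k] P :=
  (LinearMap.mul' k P) ∘ₗ (LinearMap.lTensor P Ψ) ∘ₗ ρ.toLinearMap

/-!
Write `f ⋆ g` for `p ↦ f(p₍₀₎) g(p₍₁₎)` (`comodConv`). Coassociativity of `ρ` makes this a right
action of the convolution algebra, `(f ⋆ g) ⋆ h = f ⋆ (g * h)`, and `s_Φ = id ⋆ Φ⁻¹`, while
`ρ = ι₁ ⋆ ι₂` for the inclusions `ι₁ p = p ⊗ 1`, `ι₂ a = 1 ⊗ a`. In the convolution algebra of maps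
`A → P ⊗ A`, covariance of `Φ` reads `ρ ∘ Φ = (ι₁ ∘ Φ) * ι₂`, so `ι₂ = (ι₁ ∘ Φ⁻¹) * (ρ ∘ Φ)` and
`ι₂ * (ρ ∘ Φ⁻¹) = ι₁ ∘ Φ⁻¹`. Hence
`ρ ∘ s_Φ = ρ ⋆ (ρ ∘ Φ⁻¹) = ι₁ ⋆ (ι₂ * (ρ ∘ Φ⁻¹)) = ι₁ ⋆ (ι₁ ∘ Φ⁻¹) = ι₁ ∘ s_Φ`.
-/

open LinearMap WithConv
open Algebra.TensorProduct (includeLeft includeRight)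

section ComodConv

variable {R H E M N : Type*} [CommSemiring R] [AddCommMonoid H] [Module R H]
  [AddCommMonoid E] [Module R E] [Semiring M] [Algebra R M] [Semiring N] [Algebra R N]

noncomputable def comodConv (ρ : E →ₗ[R] E ⊗[R] H) (f : E →ₗ[R] M) (g : H →ₗ[R] M) :
    E →ₗ[R] M :=
  mul' R M ∘ₗ map f g ∘ₗ ρ

lemma algHom_comp_comodConv (φ : M →ₐ[R] N) (ρ : E →ₗ[R] E ⊗[R] H) (f : E →ₗ[R] M)
    (g : H →ₗ[R] M) :
    φ.toLinearMap ∘ₗ comodConv ρ f g = comodConv ρ (φ.toLinearMap ∘ₗ f) (φ.toLinearMap ∘ₗ g) := by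
  simp only [comodConv, map_comp, ← comp_assoc, AlgHom.comp_mul']

variable [CoalgebraStruct R H]

lemma comodConv_comodConv {ρ : E →ₗ[R] E ⊗[R] H}
    (hρ : rTensor H ρ ∘ₗ ρ = (TensorProduct.assoc R E H H).symm.toLinearMap ∘ₗ
      lTensor E (Coalgebra.comul (R := R) (A := H)) ∘ₗ ρ)
    (f : E →ₗ[R] M) (g h : H →ₗ[R] M) :
    comodConv ρ (comodConv ρ f g) h = comodConv ρ f (toConv g * toConv h).ofConv := by
  have hμ : mul' R M ∘ₗ map (mul' R M ∘ₗ map f g) h ∘ₗ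
      (TensorProduct.assoc R E H H).symm.toLinearMap = mul' R M ∘ₗ map f (mul' R M ∘ₗ map g h) := by
    ext; simp [mul_assoc]
  calc comodConv ρ (comodConv ρ f g) h
      = (mul' R M ∘ₗ map (mul' R M ∘ₗ map f g) h) ∘ₗ rTensor H ρ ∘ₗ ρ := by
        rw [← comp_assoc ρ (rTensor H ρ), comp_assoc (rTensor H ρ), map_comp_rTensor]; rfl
    _ = (mul' R M ∘ₗ map (mul' R M ∘ₗ map f g) h ∘ₗ
          (TensorProduct.assoc R E H H).symm.toLinearMap) ∘ₗ
          lTensor E (Coalgebra.comul (R := R) (A := H)) ∘ₗ ρ := by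
        rw [hρ]; rfl
    _ = comodConv ρ f (toConv g * toConv h).ofConv := by
        rw [hμ, ← comp_assoc ρ (lTensor E _), comp_assoc (lTensor E _), map_comp_lTensor]; rfl

lemma comodConv_comp_of_comp_eq_map_comul {ρ : E →ₗ[R] E ⊗[R] H} {Φ : H →ₗ[R] E}
    (hΦ : ρ ∘ₗ Φ = map Φ LinearMap.id ∘ₗ Coalgebra.comul) (f : E →ₗ[R] M) (g : H →ₗ[R] M) :
    comodConv ρ f g ∘ₗ Φ = (toConv (f ∘ₗ Φ) * toConv g).ofConv := by
  rw [comodConv, comp_assoc, comp_assoc, hΦ, ← comp_assoc Coalgebra.comul, ← map_comp, comp_id]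
  rfl

end ComodConv

section TensorInclusions

variable {R H M N : Type*} [CommSemiring R] [Semiring M] [Algebra R M] [Semiring N] [Algebra R N]

lemma mul'_comp_map_includeLeft_includeRight :
    mul' R (M ⊗[R] N) ∘ₗ map (includeLeft (S := R)).toLinearMap includeRight.toLinearMap =
      LinearMap.id := by
  ext; simp

lemma comodConv_includeLeft_includeRight (ρ : M →ₗ[R] M ⊗[R] N) :
    comodConv ρ (includeLeft (S := R)).toLinearMap includeRight.toLinearMap = ρ := by
  rw [comodConv, ← comp_assoc, mul'_comp_map_includeLeft_includeRight, id_comp]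

lemma includeLeft_convMul_includeRight [AddCommMonoid H] [Module R H] [CoalgebraStruct R H]
    (f : H →ₗ[R] M) (g : H →ₗ[R] N) :
    toConv ((includeLeft (S := R)).toLinearMap ∘ₗ f) * toConv (includeRight.toLinearMap ∘ₗ g) =
      toConv (map f g ∘ₗ Coalgebra.comul) := by
  rw [LinearMap.convMul_def, map_comp, ← comp_assoc, ← comp_assoc,
    mul'_comp_map_includeLeft_includeRight, id_comp]

lemma comodConv_id_mul_of_coinvariant (ρ : M →ₐ[R] M ⊗[R] N) (g : N →ₗ[R] M) {b : M}
    (hb : ρ b = b ⊗ₜ[R] 1) (p : M) :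
    comodConv ρ.toLinearMap LinearMap.id g (b * p) =
      b * comodConv ρ.toLinearMap LinearMap.id g p := by
  have hmul : mul' R M ∘ₗ map LinearMap.id g ∘ₗ mulLeft R (b ⊗ₜ[R] (1 : N)) =
      mulLeft R b ∘ₗ mul' R M ∘ₗ map LinearMap.id g := by
    ext; simp [mul_assoc]
  calc comodConv ρ.toLinearMap LinearMap.id g (b * p)
      = (mul' R M ∘ₗ map LinearMap.id g ∘ₗ mulLeft R (b ⊗ₜ[R] (1 : N))) (ρ p) := by
        simp [comodConv, map_mul, hb]
    _ = b * comodConv ρ.toLinearMap LinearMap.id g p := by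
        rw [hmul]; rfl

end TensorInclusions

section ConvCompLeft

variable {R H M N : Type*} [CommSemiring R] [AddCommMonoid H] [Module R H] [Coalgebra R H]
  [Semiring M] [Algebra R M] [Semiring N] [Algebra R N]

noncomputable def AlgHom.convCompLeft (φ : M →ₐ[R] N) :
    WithConv (H →ₗ[R] M) →+* WithConv (H →ₗ[R] N) where
  toFun f := toConv (φ.toLinearMap ∘ₗ f.ofConv)
  map_one' := by ext; simp
  map_mul' f g := WithConv.ext (algHom_comp_convMul_distrib φ f g)
  map_zero' := by ext; simp
  map_add' f g := by ext; simp

lemma AlgHom.convCompLeft_toConv (φ : M →ₐ[R] N) (f : H →ₗ[R] M) :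
    φ.convCompLeft (toConv f) = toConv (φ.toLinearMap ∘ₗ f) := rfl

end ConvCompLeft

section Trivialization

variable {R H E : Type*} [CommSemiring R] [Semiring H] [Algebra R H] [Coalgebra R H]
  [Semiring E] [Algebra R E]

lemma includeRight_convMul_comp_inv (ρ : E →ₐ[R] E ⊗[R] H) {Φ Ψ : H →ₗ[R] E}
    (h₁ : toConv Φ * toConv Ψ = 1) (h₂ : toConv Ψ * toConv Φ = 1)
    (hΦ : ρ.toLinearMap ∘ₗ Φ = map Φ LinearMap.id ∘ₗ Coalgebra.comul) :
    toConv includeRight.toLinearMap * toConv (ρ.toLinearMap ∘ₗ Ψ) =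
      toConv ((includeLeft (S := R)).toLinearMap ∘ₗ Ψ) := by
  set ι := (includeLeft : E →ₐ[R] E ⊗[R] H).convCompLeft (H := H)
  have hρΦ : ρ.convCompLeft (toConv Φ) =
      ι (toConv Φ) * toConv includeRight.toLinearMap := by
    rw [AlgHom.convCompLeft_toConv, hΦ, AlgHom.convCompLeft_toConv,
      ← includeLeft_convMul_includeRight, comp_id]
  have hJ : toConv includeRight.toLinearMap =
      ι (toConv Ψ) * ρ.convCompLeft (toConv Φ) := by
    rw [hρΦ, ← mul_assoc, ← map_mul, h₂, map_one, one_mul]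
  rw [hJ, ← AlgHom.convCompLeft_toConv, mul_assoc, ← map_mul, h₁, map_one, mul_one]
  rfl

lemma coaction_comp_comodConv_id_eq_includeLeft_comp (ρ : E →ₐ[R] E ⊗[R] H)
    (hρ : rTensor H ρ.toLinearMap ∘ₗ ρ.toLinearMap =
      (TensorProduct.assoc R E H H).symm.toLinearMap ∘ₗ
        lTensor E (Coalgebra.comul (R := R) (A := H)) ∘ₗ ρ.toLinearMap)
    {Φ Ψ : H →ₗ[R] E} (h₁ : toConv Φ * toConv Ψ = 1) (h₂ : toConv Ψ * toConv Φ = 1)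
    (hΦ : ρ.toLinearMap ∘ₗ Φ = map Φ LinearMap.id ∘ₗ Coalgebra.comul) :
    ρ.toLinearMap ∘ₗ comodConv ρ.toLinearMap LinearMap.id Ψ =
      (includeLeft : E →ₐ[R] E ⊗[R] H).toLinearMap ∘ₗ comodConv ρ.toLinearMap LinearMap.id Ψ := by
  calc ρ.toLinearMap ∘ₗ comodConv ρ.toLinearMap LinearMap.id Ψ
      = comodConv ρ.toLinearMap ρ.toLinearMap (ρ.toLinearMap ∘ₗ Ψ) := by
        rw [algHom_comp_comodConv, comp_id]
    _ = comodConv ρ.toLinearMap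
          (comodConv ρ.toLinearMap includeLeft.toLinearMap includeRight.toLinearMap)
          (ρ.toLinearMap ∘ₗ Ψ) := by
        rw [comodConv_includeLeft_includeRight]
    _ = comodConv ρ.toLinearMap includeLeft.toLinearMap (includeLeft.toLinearMap ∘ₗ Ψ) := by
        rw [comodConv_comodConv hρ, includeRight_convMul_comp_inv ρ h₁ h₂ hΦ, ofConv_toConv]
    _ = includeLeft.toLinearMap ∘ₗ comodConv ρ.toLinearMap LinearMap.id Ψ := by
        rw [algHom_comp_comodConv, comp_id]

end Trivialization

lemma sPhi_eq_comodConv (ρ : P →ₐ[k] P ⊗[k] A) (Ψ : A →ₗ[k] P) :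
    sPhi k ρ Ψ = comodConv ρ.toLinearMap LinearMap.id Ψ := rfl

theorem stmt7 (ρ : P →ₐ[k] P ⊗[k] A)
    (hcoassoc : (LinearMap.rTensor A ρ.toLinearMap) ∘ₗ ρ.toLinearMap =
      (TensorProduct.assoc k P A A).symm.toLinearMap ∘ₗ
        (LinearMap.lTensor P (Coalgebra.comul (R := k) (A := A))) ∘ₗ ρ.toLinearMap)
    (Φ Ψ : A →ₗ[k] P)
    (hinv₁ : conv k Φ Ψ = convUnit k) (hinv₂ : conv k Ψ Φ = convUnit k)
    (hΦ : ρ.toLinearMap ∘ₗ Φ =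
      (TensorProduct.map Φ LinearMap.id) ∘ₗ (Coalgebra.comul (R := k) (A := A))) :
    (∀ p : P, ρ (sPhi k ρ Ψ p) = (sPhi k ρ Ψ p) ⊗ₜ[k] (1 : A)) ∧
      (∀ b p : P, ρ b = b ⊗ₜ[k] (1 : A) →
        sPhi k ρ Ψ (b * p) = b * sPhi k ρ Ψ p) ∧
      (∀ a : A, sPhi k ρ Ψ (Φ a) =
        algebraMap k P (Coalgebra.counit (R := k) (A := A) a)) := by
  have h₁ : toConv Φ * toConv Ψ = 1 := congrArg toConv hinv₁
  have h₂ : toConv Ψ * toConv Φ = 1 := congrArg toConv hinv₂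
  simp only [sPhi_eq_comodConv]
  refine ⟨fun p ↦ ?_, fun b p hb ↦ comodConv_id_mul_of_coinvariant ρ Ψ hb p, fun a ↦ ?_⟩
  · exact LinearMap.congr_fun
      (coaction_comp_comodConv_id_eq_includeLeft_comp ρ hcoassoc h₁ h₂ hΦ) p
  · rw [← LinearMap.comp_apply, comodConv_comp_of_comp_eq_map_comul hΦ, id_comp, h₁]
    rfl
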